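/- arXiv:2006.16887 — 5 statements merged into one kernel-verified Lean document; each statement's English description precedes it below -/
import Mathlib

section
/- Let G₁ and G₂ be graphs on n vertices and f: V(G₁) → V(G₂) a bijection. Let G₁ ⊟_f G₂ be the graph on V(G₁) ∪ V(G₂) whose induced subgraphs on V(G₁) and V(G₂) are G₁ and G₂, and whose cross edges are exactly {v f(v) : v ∈ V(G₁)}. Then the thinness of the complement of G₁ ⊟_f G₂ is at least n/2. -/
open SimpleGraph

/-- An ordering (given by an injective rank function `f`) and a partition (given by a
coloring `c`) are consistent: for `r < s < t`, if `r, s` are in the same class and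
`t` is adjacent to `r`, then `t` is adjacent to `s`. -/
def Consistent {V : Type*} (G : SimpleGraph V) (f : V → ℕ) (c : V → ℕ) : Prop :=
  ∀ r s t : V, f r < f s → f s < f t → c r = c s → G.Adj t r → G.Adj t s

/-- Strong consistency: consistency with the ordering and with its reverse. -/
def StronglyConsistent {V : Type*} (G : SimpleGraph V) (f : V → ℕ) (c : V → ℕ) : Prop :=
  Consistent G f c ∧
    ∀ r s t : V, f r < f s → f s < f t → c s = c t → G.Adj t r → G.Adj s r

/-- The thinness of a graph. -/
noncomputable def thin {V : Type*} (G : SimpleGraph V) : ℕ :=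
  sInf {k | ∃ f c : V → ℕ, Function.Injective f ∧ (∀ v, c v < k) ∧ Consistent G f c}

/-- The proper thinness of a graph. -/
noncomputable def pthin {V : Type*} (G : SimpleGraph V) : ℕ :=
  sInf {k | ∃ f c : V → ℕ, Function.Injective f ∧ (∀ v, c v < k) ∧ StronglyConsistent G f c}

/-- Independent thinness: classes must be independent sets. -/
noncomputable def indthin {V : Type*} (G : SimpleGraph V) : ℕ :=
  sInf {k | ∃ f c : V → ℕ, Function.Injective f ∧ (∀ v, c v < k) ∧ Consistent G f c ∧
    ∀ u v : V, c u = c v → ¬ G.Adj u v}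

/-- Independent proper thinness. -/
noncomputable def indpthin {V : Type*} (G : SimpleGraph V) : ℕ :=
  sInf {k | ∃ f c : V → ℕ, Function.Injective f ∧ (∀ v, c v < k) ∧ StronglyConsistent G f c ∧
    ∀ u v : V, c u = c v → ¬ G.Adj u v}

/-- Complete thinness: classes must be cliques. -/
noncomputable def compthin {V : Type*} (G : SimpleGraph V) : ℕ :=
  sInf {k | ∃ f c : V → ℕ, Function.Injective f ∧ (∀ v, c v < k) ∧ Consistent G f c ∧
    ∀ u v : V, u ≠ v → c u = c v → G.Adj u v}

/-- Complete proper thinness. -/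
noncomputable def comppthin {V : Type*} (G : SimpleGraph V) : ℕ :=
  sInf {k | ∃ f c : V → ℕ, Function.Injective f ∧ (∀ v, c v < k) ∧ StronglyConsistent G f c ∧
    ∀ u v : V, u ≠ v → c u = c v → G.Adj u v}

/-- The incompatibility graph `G_<` of a graph and an ordering: for `v < w`,
`vw` is an edge iff there is `z > w` adjacent to `v` but not to `w`. -/
def incompat {V : Type*} (G : SimpleGraph V) (f : V → ℕ) : SimpleGraph V where
  Adj v w :=
    (f v < f w ∧ ∃ z, f w < f z ∧ G.Adj z v ∧ ¬ G.Adj z w) ∨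
    (f w < f v ∧ ∃ z, f v < f z ∧ G.Adj z w ∧ ¬ G.Adj z v)
  symm := ⟨fun v w h => h.symm⟩
  loopless := ⟨fun v h => by rcases h with ⟨h, _⟩ | ⟨h, _⟩ <;> exact lt_irrefl _ h⟩

/-- The join of two graphs. -/
def joinG {V₁ V₂ : Type*} (G₁ : SimpleGraph V₁) (G₂ : SimpleGraph V₂) :
    SimpleGraph (V₁ ⊕ V₂) where
  Adj x y := match x, y with
    | Sum.inl u, Sum.inl v => G₁.Adj u v
    | Sum.inr u, Sum.inr v => G₂.Adj u v
    | Sum.inl _, Sum.inr _ => True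
    | Sum.inr _, Sum.inl _ => True
  symm := by constructor; rintro (u | u) (v | v) h
             · exact G₁.symm.symm _ _ h
             · trivial
             · trivial
             · exact G₂.symm.symm _ _ h
  loopless := by constructor; rintro (u | u) h
                 · exact G₁.loopless.irrefl u h
                 · exact G₂.loopless.irrefl u h

/-- A graph is complete iff all pairs of distinct vertices are adjacent. -/
def IsCompleteGraph {V : Type*} (G : SimpleGraph V) : Prop :=
  ∀ u v : V, u ≠ v → G.Adj u v

/-- The clique number of a graph. -/
noncomputable def omegaNum {V : Type*} (G : SimpleGraph V) : ℕ :=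
  sSup {n | ∃ s : Finset V, s.card = n ∧ ∀ u ∈ s, ∀ v ∈ s, u ≠ v → G.Adj u v}

/-- The independence number of a graph. -/
noncomputable def alphaNum {V : Type*} (G : SimpleGraph V) : ℕ :=
  sSup {n | ∃ s : Finset V, s.card = n ∧ ∀ u ∈ s, ∀ v ∈ s, u ≠ v → ¬ G.Adj u v}


/-- The graph `G₁ ⊟_e G₂`: disjoint copies of `G₁` and `G₂` with the cross edges
given exactly by the bijection `e`. -/
def boxminus {V₁ V₂ : Type*} (G₁ : SimpleGraph V₁) (G₂ : SimpleGraph V₂) (e : V₁ ≃ V₂) :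
    SimpleGraph (V₁ ⊕ V₂) where
  Adj x y := match x, y with
    | Sum.inl u, Sum.inl v => G₁.Adj u v
    | Sum.inr u, Sum.inr v => G₂.Adj u v
    | Sum.inl u, Sum.inr w => w = e u
    | Sum.inr w, Sum.inl u => w = e u
  symm := by constructor; rintro (u | u) (v | v) h
             · exact G₁.symm.symm _ _ h
             · exact h
             · exact h
             · exact G₂.symm.symm _ _ h
  loopless := by constructor; rintro (u | u) h
                 · exact G₁.loopless.irrefl u h
                 · exact G₂.loopless.irrefl u h

/-! Fix a consistent ordering and partition of `(G₁ ⊟_e G₂)ᶜ` into `k` classes, and pair each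
`v ∈ V₁` with `e v`. In the complement, `e s` is adjacent to every vertex of `V₁` except `s`.
So if `u` precedes `s` in the same class and `s` precedes `e s`, consistency for the triple
`u, s, e s` would make `e s` adjacent to `s`: among the vertices of `V₁` that precede their
partner, the classes are pairwise distinct, and there are at most `k` of them. Symmetrically
for `V₂`, and every pair has exactly one member preceding the other, so `n ≤ 2k`. -/

open Finset

section Consistent

variable {V : Type*} {G : SimpleGraph V} {f c : V → ℕ}

lemma consistent_of_injective (hc : Function.Injective c) : Consistent G f c :=
  fun _ _ _ hrs _ hcrs _ => absurd (hc hcrs ▸ hrs) (lt_irrefl _)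

variable (G) in
lemma exists_consistent_lt_thin [Finite V] :
    ∃ f c : V → ℕ, Function.Injective f ∧ (∀ v, c v < thin G) ∧ Consistent G f c := by
  obtain ⟨f, hf⟩ := Countable.exists_injective_nat V
  obtain ⟨B, hB⟩ := (Set.finite_range f).bddAbove
  exact Nat.sInf_mem
    (s := {k | ∃ f c : V → ℕ, Function.Injective f ∧ (∀ v, c v < k) ∧ Consistent G f c})
    ⟨B + 1, f, f, hf, fun v => Nat.lt_succ_of_le (hB ⟨v, rfl⟩), consistent_of_injective hf⟩

lemma Consistent.injOn_of_adj_iff_ne {ι : Type*} (hcons : Consistent G f c)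
    (hf : Function.Injective f) {x y : ι → V} (hxy : ∀ i j, G.Adj (y j) (x i) ↔ i ≠ j) :
    Set.InjOn (c ∘ x) {i | f (x i) < f (y i)} := by
  have key : ∀ i j, f (x i) < f (x j) → f (x j) < f (y j) → c (x i) ≠ c (x j) := by
    intro i j hij hj hc
    have hne : i ≠ j := by rintro rfl; exact lt_irrefl _ hij
    exact (hxy j j).1 (hcons _ _ _ hij hj hc ((hxy i j).2 hne)) rfl
  intro i hi j hj hc
  by_contra hne
  have hx : f (x i) ≠ f (x j) := fun h => (hxy j j).1 (hf h ▸ (hxy i j).2 hne) rfl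
  rcases hx.lt_or_gt with h | h
  · exact key i j h hj hc
  · exact key j i h hi hc.symm

lemma Consistent.card_filter_lt_le {ι : Type*} [Fintype ι] {k : ℕ} (hcons : Consistent G f c)
    (hf : Function.Injective f) (hc : ∀ v, c v < k) {x y : ι → V}
    (hxy : ∀ i j, G.Adj (y j) (x i) ↔ i ≠ j) :
    #{i | f (x i) < f (y i)} ≤ k := by
  simpa using card_le_card_of_injOn (t := range k) (c ∘ x) (fun i _ => mem_range.2 (hc _)) (by simpa using hcons.injOn_of_adj_iff_ne hf hxy)

end Consistent

section Boxminus

variable {V₁ V₂ : Type*} (G₁ : SimpleGraph V₁) (G₂ : SimpleGraph V₂) (e : V₁ ≃ V₂)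

lemma compl_boxminus_adj_inr_inl (i j : V₁) :
    (boxminus G₁ G₂ e)ᶜ.Adj (.inr (e j)) (.inl i) ↔ i ≠ j := by
  simp [boxminus, eq_comm]

lemma compl_boxminus_adj_inl_inr (i j : V₁) :
    (boxminus G₁ G₂ e)ᶜ.Adj (.inl j) (.inr (e i)) ↔ i ≠ j := by
  simp [boxminus]

end Boxminus

theorem thin_compl_boxminus_general {V₁ V₂ : Type*} [Fintype V₁]
    (G₁ : SimpleGraph V₁) (G₂ : SimpleGraph V₂) (e : V₁ ≃ V₂) :
    Fintype.card V₁ ≤ 2 * thin (boxminus G₁ G₂ e)ᶜ := by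
  classical
  have : Finite V₂ := .of_equiv V₁ e
  obtain ⟨f, c, hf, hc, hcons⟩ := exists_consistent_lt_thin (boxminus G₁ G₂ e)ᶜ
  have h₁ := hcons.card_filter_lt_le hf hc (compl_boxminus_adj_inr_inl G₁ G₂ e)
  have h₂ := hcons.card_filter_lt_le hf hc (compl_boxminus_adj_inl_inr G₁ G₂ e)
  have hsplit : #{i | f (.inr (e i)) < f (.inl i)} = #{i | ¬ f (.inl i) < f (.inr (e i))} := by
    congr 1
    refine filter_congr fun i _ => ?_
    have : f (.inl i) ≠ f (.inr (e i)) := fun h => Sum.inl_ne_inr (hf h)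
    omega
  have := card_filter_add_card_filter_not (s := univ)
    (fun i : V₁ => f (.inl i) < f (.inr (e i)))
  simp only [card_univ] at this
  omega

/-- The thinness of the complement of `G₁ ⊟_e G₂` is at least `n/2`,
where `n` is the number of vertices of `G₁`. -/
theorem thin_compl_boxminus {V₁ V₂ : Type*} [Fintype V₁] [Fintype V₂]
    (G₁ : SimpleGraph V₁) (G₂ : SimpleGraph V₂) (e : V₁ ≃ V₂) :
    Fintype.card V₁ ≤ 2 * thin (boxminus G₁ G₂ e)ᶜ :=
  thin_compl_boxminus_general G₁ G₂ e
end

section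
/- For any two graphs G₁ and G₂, thin(G₁ ∪ G₂) = max{thin(G₁), thin(G₂)}, where ∪ denotes the disjoint union. -/
/-!
An ordering and partition of `G₁ ⊕ G₂` restrict to ones of each `Gᵢ`, so thinness is monotone
under induced subgraphs. Conversely, placing all of `G₁` before all of `G₂` and reusing the same
`k` class labels on both sides is consistent: a triple `r < s < t` with `t ~ r` lies in a single
component, since `s` sits between two vertices of it.
-/

open SimpleGraph

section

variable {V W V₁ V₂ : Type*}

def IsThin (G : SimpleGraph V) (k : ℕ) : Prop :=
  ∃ f c : V → ℕ, Function.Injective f ∧ (∀ v, c v < k) ∧ Consistent G f c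

theorem IsThin.thin_le {G : SimpleGraph V} {k : ℕ} (h : IsThin G k) : thin G ≤ k :=
  Nat.sInf_le h

theorem IsThin.mono {G : SimpleGraph V} {k l : ℕ} (h : IsThin G k) (hkl : k ≤ l) : IsThin G l :=
  let ⟨f, c, hf, hc, hcons⟩ := h
  ⟨f, c, hf, fun v => (hc v).trans_le hkl, hcons⟩

theorem consistent_of_injective_coloring (G : SimpleGraph V) {f c : V → ℕ}
    (hc : Function.Injective c) : Consistent G f c :=
  fun _ _ _ hrs _ hcrs _ => absurd hrs (hc hcrs ▸ lt_irrefl _)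

theorem isThin_card [Fintype V] (G : SimpleGraph V) : IsThin G (Fintype.card V) :=
  let e : V → ℕ := fun v => Fintype.equivFin V v
  have he : Function.Injective e := Fin.val_injective.comp (Fintype.equivFin V).injective
  ⟨e, e, he, fun v => (Fintype.equivFin V v).isLt, consistent_of_injective_coloring G he⟩

theorem isThin_thin [Fintype V] (G : SimpleGraph V) : IsThin G (thin G) :=
  Nat.sInf_mem (s := {k | IsThin G k}) ⟨_, isThin_card G⟩

theorem Consistent.comap {G : SimpleGraph V} {H : SimpleGraph W} {f c : W → ℕ}
    (h : Consistent H f c) (e : G ↪g H) : Consistent G (f ∘ e) (c ∘ e) :=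
  fun r s t hrs hst hcrs htr =>
    e.map_adj_iff.mp (h (e r) (e s) (e t) hrs hst hcrs (e.map_adj_iff.mpr htr))

theorem IsThin.comap {G : SimpleGraph V} {H : SimpleGraph W} {k : ℕ} (h : IsThin H k)
    (e : G ↪g H) : IsThin G k :=
  let ⟨f, c, hf, hc, hcons⟩ := h
  ⟨f ∘ e, c ∘ e, hf.comp e.injective, fun v => hc (e v), hcons.comap e⟩

theorem thin_le_of_embedding [Fintype W] {G : SimpleGraph V} {H : SimpleGraph W} (e : G ↪g H) :
    thin G ≤ thin H :=
  ((isThin_thin H).comap e).thin_le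

theorem Consistent.sum {G₁ : SimpleGraph V₁} {G₂ : SimpleGraph V₂} {f₁ c₁ : V₁ → ℕ}
    {f₂ c₂ : V₂ → ℕ} {N : ℕ} (h₁ : Consistent G₁ f₁ c₁) (h₂ : Consistent G₂ f₂ c₂)
    (hN : ∀ u, f₁ u < N) :
    Consistent (G₁ ⊕g G₂) (Sum.elim f₁ (N + f₂ ·)) (Sum.elim c₁ c₂) := by
  rintro (r | r) (s | s) (t | t) hrs hst hcrs htr <;>
    simp only [Sum.elim_inl, Sum.elim_inr, sum_adj] at hrs hst hcrs htr ⊢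
  · exact h₁ r s t hrs hst hcrs htr
  · have := hN t; omega
  · have := hN s; omega
  · exact h₂ r s t (by omega) (by omega) hcrs htr

theorem IsThin.sum [Finite V₁] {G₁ : SimpleGraph V₁} {G₂ : SimpleGraph V₂} {k : ℕ}
    (h₁ : IsThin G₁ k) (h₂ : IsThin G₂ k) : IsThin (G₁ ⊕g G₂) k := by
  obtain ⟨f₁, c₁, hf₁, hc₁, hcons₁⟩ := h₁
  obtain ⟨f₂, c₂, hf₂, hc₂, hcons₂⟩ := h₂
  obtain ⟨M, hM⟩ := (Set.finite_range f₁).bddAbove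
  have hN : ∀ u, f₁ u < M + 1 := fun u => Nat.lt_succ_of_le (hM ⟨u, rfl⟩)
  refine ⟨Sum.elim f₁ (M + 1 + f₂ ·), Sum.elim c₁ c₂, ?_, ?_, hcons₁.sum hcons₂ hN⟩
  · exact hf₁.sumElim ((add_right_injective _).comp hf₂) fun u _ =>
      ((hN u).trans_le (Nat.le_add_right _ _)).ne
  · rintro (v | v)
    exacts [hc₁ v, hc₂ v]

end

/-- The thinness of a disjoint union is the maximum of the thinnesses. -/
theorem thin_sum {V₁ V₂ : Type*} [Fintype V₁] [Fintype V₂]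
    (G₁ : SimpleGraph V₁) (G₂ : SimpleGraph V₂) :
    thin (G₁ ⊕g G₂) = max (thin G₁) (thin G₂) := by
  apply le_antisymm
  · exact (((isThin_thin G₁).mono le_sup_left).sum ((isThin_thin G₂).mono le_sup_right)).thin_le
  · exact max_le (thin_le_of_embedding Embedding.sumInl) (thin_le_of_embedding Embedding.sumInr)
end

section
/- Let G=(V,E) be a non-complete graph with thin(G)=k and let v₁ < ⋯ < vₙ be any ordering of V. Then there exists a clique v_{i₁} < ⋯ < v_{i_k} of size k in the incompatibility graph G_<, together with a vertex v_j > v_{i₁} such that v_j v_{i₁} ∉ E. -/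
open SimpleGraph

/-!
For an ordering `f`, let `v ≤ w` mean `v = w`, or `f v < f w` and every neighbour of `v` after `w`
is a neighbour of `w`. This is a partial order whose incomparable pairs are exactly the edges of
`G_<`, and every partition of `V` into its chains is consistent with `f`. Dilworth's theorem
therefore yields a clique of size `thin G` in `G_<`.

To control the first vertex of the clique, run this argument for the ordering obtained from `f`
by moving the vertices adjacent to all later vertices to the end. Its incompatibility graph is a
subgraph of that of `f`, and each of its edges joins two vertices having a later non-neighbour.
When `thin G = 1` a single such vertex suffices; it exists because `G` is not complete.
-/

open Finset

section Dilworth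

variable {α : Type*} [PartialOrder α]

structure IsChainColoring (s : Finset α) (d : ℕ) (c : α → ℕ) : Prop where
  lt : ∀ x ∈ s, c x < d
  le_or_le : ∀ x ∈ s, ∀ y ∈ s, c x = c y → x ≤ y ∨ y ≤ x

namespace IsChainColoring

variable {s A : Finset α} {d : ℕ} {c : α → ℕ}

lemma injOn_of_isAntichain (hc : IsChainColoring s d c) (hAs : A ⊆ s)
    (hA : IsAntichain (· ≤ ·) (A : Set α)) : Set.InjOn c A := by
  intro x hx y hy hxy
  by_contra hne
  rcases hc.le_or_le x (hAs hx) y (hAs hy) hxy with h | h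
  · exact hA hx hy hne h
  · exact hA hy hx (Ne.symm hne) h

lemma exists_mem_antichain_eq (hc : IsChainColoring s d c) (hAs : A ⊆ s)
    (hA : IsAntichain (· ≤ ·) (A : Set α)) (hd : d ≤ #A) {x : α} (hx : x ∈ s) :
    ∃ a ∈ A, c a = c x :=
  surjOn_of_injOn_of_card_le (t := range d) c (fun a ha => mem_range.2 (hc.lt a (hAs ha)))
    (hc.injOn_of_isAntichain hAs hA) (by simpa using hd) (mem_range.2 (hc.lt x hx))

lemma of_sdiff_of_isChain [DecidableEq α] {C : Finset α} (hC : IsChain (· ≤ ·) (C : Set α))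
    (hc : IsChainColoring (s \ C) d c) :
    IsChainColoring s (d + 1) (fun x => if x ∈ C then d else c x) := by
  have hlt : ∀ x ∈ s, x ∉ C → c x < d := fun x hx hxC => hc.lt x (mem_sdiff.2 ⟨hx, hxC⟩)
  constructor
  · intro x hx
    split_ifs with hxC
    · exact d.lt_succ_self
    · exact (hlt x hx hxC).trans d.lt_succ_self
  · intro x hx y hy hxy
    by_cases hxC : x ∈ C <;> by_cases hyC : y ∈ C <;> simp only [hxC, hyC, if_true, if_false] at hxy
    · exact hC.total (mem_coe.2 hxC) (mem_coe.2 hyC)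
    · exact absurd hxy (hlt y hy hyC).ne'
    · exact absurd hxy (hlt x hx hxC).ne
    · exact hc.le_or_le x (mem_sdiff.2 ⟨hx, hxC⟩) y (mem_sdiff.2 ⟨hy, hyC⟩) hxy

/-- Both colourings take every colour exactly once on `A`, so each class below `A` is glued to
the class above `A` through the same element of `A`. -/
lemma exists_of_lower_upper [DecidableEq α] [DecidableLE α] (hAs : A ⊆ s)
    (hA : IsAntichain (· ≤ ·) (A : Set α)) (hd : d ≤ #A)
    (hcover : ∀ x ∈ s, ∃ a ∈ A, x ≤ a ∨ a ≤ x) {c₁ c₂ : α → ℕ}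
    (hc₁ : IsChainColoring {x ∈ s | ∃ a ∈ A, x ≤ a} d c₁)
    (hc₂ : IsChainColoring {x ∈ s | ∃ a ∈ A, a ≤ x} d c₂) :
    ∃ c, IsChainColoring s d c := by
  set L := {x ∈ s | ∃ a ∈ A, x ≤ a}
  set U := {x ∈ s | ∃ a ∈ A, a ≤ x}
  have hAL : A ⊆ L := fun a ha => mem_filter.2 ⟨hAs ha, a, ha, le_rfl⟩
  have hAU : A ⊆ U := fun a ha => mem_filter.2 ⟨hAs ha, a, ha, le_rfl⟩
  have hU : ∀ x ∈ s, x ∉ L → x ∈ U := by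
    intro x hx hxL
    obtain ⟨a, ha, hxa | hax⟩ := hcover x hx
    · exact absurd (mem_filter.2 ⟨hx, a, ha, hxa⟩) hxL
    · exact mem_filter.2 ⟨hx, a, ha, hax⟩
  choose! σ hσA hσ using fun x (hx : x ∈ U) => hc₂.exists_mem_antichain_eq hAU hA hd hx
  have key : ∀ x ∈ L, ∀ y ∈ s, y ∉ L → c₁ x = c₁ (σ y) → x ≤ y := by
    intro x hx y hy hyL hxy
    have hyU := hU y hy hyL
    have hσy := hσA y hyU
    have hxσ : x ≤ σ y := by
      rcases hc₁.le_or_le x hx (σ y) (hAL hσy) hxy with h | h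
      · exact h
      · obtain ⟨-, a, ha, hxa⟩ := mem_filter.1 hx
        rwa [hA.eq hσy ha (h.trans hxa)]
    have hσle : σ y ≤ y := by
      rcases hc₂.le_or_le (σ y) (hAU hσy) y hyU (hσ y hyU) with h | h
      · exact h
      · exact absurd (mem_filter.2 ⟨hy, σ y, hσy, h⟩) hyL
    exact hxσ.trans hσle
  refine ⟨fun x => if x ∈ L then c₁ x else c₁ (σ x), fun x hx => ?_, fun x hx y hy hxy => ?_⟩
  · split_ifs with hxL
    · exact hc₁.lt x hxL
    · exact hc₁.lt _ (hAL (hσA x (hU x hx hxL)))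
  · by_cases hxL : x ∈ L <;> by_cases hyL : y ∈ L <;>
      simp only [hxL, hyL, if_true, if_false] at hxy
    · exact hc₁.le_or_le x hxL y hyL hxy
    · exact Or.inl (key x hxL y hy hyL hxy)
    · exact Or.inr (key y hyL x hx hxL hxy.symm)
    · have hxU := hU x hx hxL
      have hyU := hU y hy hyL
      have hσxy : σ x = σ y :=
        hc₁.injOn_of_isAntichain hAL hA (hσA x hxU) (hσA y hyU) hxy
      exact hc₂.le_or_le x hxU y hyU (by rw [← hσ x hxU, ← hσ y hyU, hσxy])

end IsChainColoring

lemma IsAntichain.exists_le_or_le_of_card_le [DecidableEq α] {s A : Finset α} {d : ℕ}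
    (hs : ∀ t ⊆ s, IsAntichain (· ≤ ·) (t : Set α) → #t ≤ d) (hAs : A ⊆ s)
    (hA : IsAntichain (· ≤ ·) (A : Set α)) (hd : d ≤ #A) :
    ∀ x ∈ s, ∃ a ∈ A, x ≤ a ∨ a ≤ x := by
  intro x hx
  by_contra! h
  have hxA : x ∉ A := fun hxA => (h x hxA).1 le_rfl
  have := hs (insert x A) (insert_subset hx hAs)
    (by simpa using hA.insert (fun a ha _ => (h a ha).2) (fun a ha _ => (h a ha).1))
  rw [card_insert_of_notMem hxA] at this
  omega

theorem Finset.exists_isChainColoring_of_antichain_card_le [DecidableEq α] [DecidableLE α]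
    (s : Finset α) (d : ℕ) (hs : ∀ t ⊆ s, IsAntichain (· ≤ ·) (t : Set α) → #t ≤ d) :
    ∃ c, IsChainColoring s d c := by
  induction s using Finset.strongInduction generalizing d with
  | H s ih =>
  rcases s.eq_empty_or_nonempty with rfl | hne
  · exact ⟨0, by simp, by simp⟩
  obtain ⟨b, hb⟩ := s.exists_minimal hne
  obtain ⟨t, hbt, ht⟩ := s.exists_le_maximal hb.prop
  have hbts : {b, t} ⊆ s := insert_subset hb.prop (singleton_subset_iff.2 ht.prop)
  by_cases hA : ∀ A ⊆ s \ {b, t}, IsAntichain (· ≤ ·) (A : Set α) → #A ≤ d - 1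
  · have hd : 1 ≤ d := by simpa using hs {b} (singleton_subset_iff.2 hb.prop) (by simp)
    obtain ⟨c, hc⟩ :=
      ih (s \ {b, t}) (sdiff_ssubset hbts (insert_nonempty _ _)) (d - 1) hA
    have := hc.of_sdiff_of_isChain (by simpa using IsChain.pair hbt)
    rw [Nat.sub_add_cancel hd] at this
    exact ⟨_, this⟩
  push Not at hA
  obtain ⟨A, hAsub, hA, hcard⟩ := hA
  have hAs : A ⊆ s := hAsub.trans sdiff_subset
  have hAbt : ∀ a ∈ A, a ≠ b ∧ a ≠ t := fun a ha => by
    simpa using (mem_sdiff.1 (hAsub ha)).2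
  have hd : d ≤ #A := by have := hs A hAs hA; omega
  have ht_lower : ¬ ∃ a ∈ A, t ≤ a := fun ⟨a, ha, hta⟩ =>
    (hAbt a ha).2 (ht.eq_of_le (hAs ha) hta).symm
  have hb_upper : ¬ ∃ a ∈ A, a ≤ b := fun ⟨a, ha, hab⟩ =>
    (hAbt a ha).1 (hb.eq_of_ge (hAs ha) hab).symm
  obtain ⟨c₁, hc₁⟩ := ih {x ∈ s | ∃ a ∈ A, x ≤ a} (filter_ssubset.2 ⟨t, ht.prop, ht_lower⟩)
    d (fun u hu => hs u (hu.trans (filter_subset _ _)))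
  obtain ⟨c₂, hc₂⟩ := ih {x ∈ s | ∃ a ∈ A, a ≤ x} (filter_ssubset.2 ⟨b, hb.prop, hb_upper⟩)
    d (fun u hu => hs u (hu.trans (filter_subset _ _)))
  exact IsChainColoring.exists_of_lower_upper hAs hA hd
    (IsAntichain.exists_le_or_le_of_card_le hs hAs hA hd) hc₁ hc₂

end Dilworth

section Thinness

variable {V : Type*} {G : SimpleGraph V} {f : V → ℕ}

def Compat (G : SimpleGraph V) (f : V → ℕ) (v w : V) : Prop :=
  v = w ∨ (f v < f w ∧ ∀ z, f w < f z → G.Adj z v → G.Adj z w)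

abbrev compatOrder (G : SimpleGraph V) (f : V → ℕ) : PartialOrder V where
  le := Compat G f
  le_refl _ := Or.inl rfl
  le_trans u v w := by
    rintro (rfl | ⟨huv, hu⟩) (rfl | ⟨hvw, hv⟩)
    · exact Or.inl rfl
    · exact Or.inr ⟨hvw, hv⟩
    · exact Or.inr ⟨huv, hu⟩
    · exact Or.inr ⟨huv.trans hvw, fun z hz hzu => hv z hz (hu z (hvw.trans hz) hzu)⟩
  le_antisymm v w := by
    rintro (rfl | ⟨hvw, -⟩) (h | ⟨hwv, -⟩)
    · rfl
    · rfl
    · exact h.symm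
    · exact absurd hvw hwv.asymm

lemma incompat_adj_of_not_compat (hf : Function.Injective f) {v w : V} (hvw : v ≠ w)
    (h₁ : ¬ Compat G f v w) (h₂ : ¬ Compat G f w v) : (incompat G f).Adj v w := by
  simp only [Compat, not_or, not_and, not_forall] at h₁ h₂
  rcases lt_or_gt_of_ne (hf.ne hvw) with h | h
  · obtain ⟨z, hz, hzv, hzw⟩ := h₁.2 h
    exact Or.inl ⟨h, z, hz, hzv, hzw⟩
  · obtain ⟨z, hz, hzw, hzv⟩ := h₂.2 h
    exact Or.inr ⟨h, z, hz, hzw, hzv⟩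

lemma consistent_of_compat_total {c : V → ℕ}
    (hc : ∀ v w, c v = c w → Compat G f v w ∨ Compat G f w v) : Consistent G f c := by
  intro r s t hrs hst hcrs hadj
  rcases hc r s hcrs with (rfl | ⟨-, h⟩) | (rfl | ⟨hsr, -⟩)
  · exact hadj
  · exact h t hst hadj
  · exact hadj
  · exact absurd hrs hsr.asymm

lemma thin_le {c : V → ℕ} {k : ℕ} (hf : Function.Injective f) (hc : ∀ v, c v < k)
    (hcons : Consistent G f c) : thin G ≤ k :=
  Nat.sInf_le ⟨f, c, hf, hc, hcons⟩

lemma thin_pos [Fintype V] [Nonempty V] : 0 < thin G := by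
  let e : V → ℕ := fun v => Fintype.equivFin V v
  have he : Function.Injective e := fun v w h => (Fintype.equivFin V).injective (Fin.ext h)
  obtain ⟨-, c, -, hc, -⟩ : thin G ∈ _ := Nat.sInf_mem
    ⟨Fintype.card V, e, e, he, fun v => (Fintype.equivFin V v).isLt,
      fun _ _ _ h _ he _ => absurd he h.ne⟩
  exact (c (Classical.arbitrary V)).zero_le.trans_lt (hc _)

variable (G) in
theorem exists_incompat_clique_card_thin [Fintype V] (hf : Function.Injective f) :
    ∃ s : Finset V, #s = thin G ∧ ∀ u ∈ s, ∀ v ∈ s, u ≠ v → (incompat G f).Adj u v := by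
  classical
  let := compatOrder G f
  by_contra hno
  have hanti : ∀ t : Finset V, IsAntichain (· ≤ ·) (t : Set V) → #t < thin G := by
    intro t ht
    by_contra! hle
    obtain ⟨u, hut, hu⟩ := exists_subset_card_eq hle
    exact hno ⟨u, hu, fun x hx y hy hxy => incompat_adj_of_not_compat hf hxy
      (ht (hut hx) (hut hy) hxy) (ht (hut hy) (hut hx) hxy.symm)⟩
  have hpos : 0 < thin G := hanti ∅ (by simp)
  obtain ⟨c, hc⟩ := univ.exists_isChainColoring_of_antichain_card_le (thin G - 1)
    (fun t _ ht => Nat.le_sub_one_of_lt (hanti t ht))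
  have := thin_le hf (fun v => hc.lt v (mem_univ v))
    (consistent_of_compat_total fun v w h => hc.le_or_le v (mem_univ v) w (mem_univ w) h)
  omega

end Thinness

section Deferral

variable {V : Type*} {G : SimpleGraph V} {f : V → ℕ}

def HasLaterNonAdj (G : SimpleGraph V) (f : V → ℕ) (v : V) : Prop :=
  ∃ z, f v < f z ∧ ¬ G.Adj z v

lemma exists_hasLaterNonAdj (hf : Function.Injective f) (hG : ¬ IsCompleteGraph G) :
    ∃ v, HasLaterNonAdj G f v := by
  simp only [IsCompleteGraph, not_forall] at hG
  obtain ⟨u, v, huv, hadj⟩ := hG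
  rcases lt_or_gt_of_ne (hf.ne huv) with h | h
  · exact ⟨u, v, h, fun h' => hadj h'.symm⟩
  · exact ⟨v, u, h, hadj⟩

/-- Moves the vertices failing `p` behind all others, provided `N` exceeds every value of `f`. -/
def deferOrder (f : V → ℕ) (p : V → Prop) [DecidablePred p] (N : ℕ) (v : V) : ℕ :=
  if p v then f v else f v + N

variable {p : V → Prop} [DecidablePred p] {N : ℕ}

lemma deferOrder_lt_deferOrder_iff (hN : ∀ v, f v < N) {u w : V} :
    deferOrder f p N u < deferOrder f p N w ↔ (p u ∧ ¬ p w) ∨ ((p u ↔ p w) ∧ f u < f w) := by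
  have := hN u
  have := hN w
  unfold deferOrder
  split_ifs <;> simp [*] <;> omega

lemma deferOrder_injective (hf : Function.Injective f) (hN : ∀ v, f v < N) :
    Function.Injective (deferOrder f p N) := by
  intro u w h
  have := hN u
  have := hN w
  unfold deferOrder at h
  split_ifs at h <;> exact hf (by omega)

variable [DecidablePred (HasLaterNonAdj G f)]

local notation "g" => deferOrder f (HasLaterNonAdj G f) N

lemma incompat_witness_of_deferOrder (hf : Function.Injective f) (hN : ∀ v, f v < N) {u w z : V}
    (huw : g u < g w) (hwz : g w < g z) (hzw : ¬ G.Adj z w) :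
    (f u < f w ∧ f w < f z) ∧ HasLaterNonAdj G f u ∧ HasLaterNonAdj G f w := by
  rw [deferOrder_lt_deferOrder_iff hN] at huw hwz
  have not_later : ∀ {v y}, ¬ HasLaterNonAdj G f v → f v < f y → G.Adj y v := by
    intro v y hv hvy
    by_contra h
    exact hv ⟨y, hvy, h⟩
  have hw : HasLaterNonAdj G f w := by
    by_contra hw
    exact hzw (not_later hw (by tauto))
  have hfwz : f w < f z := by
    by_cases hz : HasLaterNonAdj G f z
    · tauto
    · rcases lt_trichotomy (f z) (f w) with h | h | h
      · exact absurd (not_later hz h).symm hzw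
      · obtain rfl := hf h
        simp at hwz
      · exact h
  exact ⟨⟨by tauto, hfwz⟩, by tauto, hw⟩

lemma incompat_deferOrder_adj (hf : Function.Injective f) (hN : ∀ v, f v < N) {u w : V}
    (h : (incompat G g).Adj u w) :
    (incompat G f).Adj u w ∧ HasLaterNonAdj G f u ∧ HasLaterNonAdj G f w := by
  rcases h with ⟨huw, z, hwz, hzu, hzw⟩ | ⟨hwu, z, huz, hzw, hzu⟩
  · obtain ⟨⟨h₁, h₂⟩, hu, hw⟩ := incompat_witness_of_deferOrder hf hN huw hwz hzw
    exact ⟨Or.inl ⟨h₁, z, h₂, hzu, hzw⟩, hu, hw⟩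
  · obtain ⟨⟨h₁, h₂⟩, hw, hu⟩ := incompat_witness_of_deferOrder hf hN hwu huz hzu
    exact ⟨Or.inr ⟨h₁, z, h₂, hzw, hzu⟩, hu, hw⟩

end Deferral

/-- If `G` is not complete and `thin G = k`, then for every ordering there is a clique of
size `k` in `G_<` whose smallest vertex has a non-neighbor of `G` above it. -/
theorem exists_clique_incompat {V : Type*} [Fintype V] (G : SimpleGraph V) (k : ℕ)
    (hnc : ¬ IsCompleteGraph G) (hk : thin G = k)
    (f : V → ℕ) (hf : Function.Injective f) :
    ∃ s : Finset V, s.card = k ∧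
      (∀ u ∈ s, ∀ v ∈ s, u ≠ v → (incompat G f).Adj u v) ∧
      ∃ x ∈ s, (∀ y ∈ s, f x ≤ f y) ∧ ∃ j : V, f x < f j ∧ ¬ G.Adj j x := by
  classical
  obtain ⟨a, ha⟩ := exists_hasLaterNonAdj hf hnc
  have hN : ∀ v, f v < univ.sup f + 1 := fun v => Nat.lt_succ_of_le (le_sup (mem_univ v))
  obtain ⟨s, hs, hclique⟩ := exists_incompat_clique_card_thin G (deferOrder_injective
    (p := HasLaterNonAdj G f) hf hN)
  have : Nonempty V := ⟨a⟩
  have hk₁ : 1 ≤ k := hk ▸ thin_pos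
  rcases hk₁.eq_or_lt with rfl | hk₂
  · exact ⟨{a}, card_singleton a, by simp, a, mem_singleton_self a, by simp, ha⟩
  rw [hk] at hs
  obtain ⟨x, hx, hmin⟩ := s.exists_min_image f (card_pos.1 (by omega))
  obtain ⟨y, hy, hyx⟩ := s.exists_mem_ne (by omega) x
  exact ⟨s, hs, fun u hu v hv huv => (incompat_deferOrder_adj hf hN (hclique u hu v hv huv)).1,
    x, hx, hmin, (incompat_deferOrder_adj hf hN (hclique x hx y hy hyx.symm)).2.1⟩
end

section
/- For any two graphs G₁, G₂, the independent thinness of the join satisfies indthin(G₁ ∨ G₂) = indthin(G₁) + indthin(G₂), and likewise for the independent proper thinness. -/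
open SimpleGraph

/-!
A class meeting both sides of a join contains an edge, so in an independent partition of
`G₁ ∨ G₂` no class meets both sides; restricting the ordering and the partition to either side
keeps (proper) consistency, so the two sides use at least `indthin G₁` and `indthin G₂` classes
(resp. `indpthin`). Conversely, giving `G₁` and `G₂` disjoint families of classes makes every
triple that meets both sides consistent, since each vertex is adjacent to the whole other side.
-/

open SimpleGraph Function Finset Sum

def ClassesIndependent {V : Type*} (G : SimpleGraph V) (c : V → ℕ) : Prop :=
  ∀ u v : V, c u = c v → ¬ G.Adj u v

def IsIndependentThin {V : Type*} (G : SimpleGraph V) (k : ℕ) : Prop :=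
  ∃ f c : V → ℕ, Injective f ∧ (∀ v, c v < k) ∧ Consistent G f c ∧ ClassesIndependent G c

def IsIndependentProperThin {V : Type*} (G : SimpleGraph V) (k : ℕ) : Prop :=
  ∃ f c : V → ℕ, Injective f ∧ (∀ v, c v < k) ∧ StronglyConsistent G f c ∧
    ClassesIndependent G c

section Comap

variable {V W : Type*} {G : SimpleGraph V} {H : SimpleGraph W} {f c : V → ℕ} {f' c' : W → ℕ}

theorem Consistent.comap_s14 (ι : H ↪g G) (hf : ∀ u v, f' u < f' v → f (ι u) < f (ι v))
    (hc : ∀ u v, c' u = c' v → c (ι u) = c (ι v)) (h : Consistent G f c) :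
    Consistent H f' c' := fun r s t hrs hst hc' hadj =>
  ι.map_adj_iff.mp (h _ _ _ (hf r s hrs) (hf s t hst) (hc r s hc') (ι.map_adj_iff.mpr hadj))

theorem StronglyConsistent.comap_s14 (ι : H ↪g G) (hf : ∀ u v, f' u < f' v → f (ι u) < f (ι v))
    (hc : ∀ u v, c' u = c' v → c (ι u) = c (ι v)) (h : StronglyConsistent G f c) :
    StronglyConsistent H f' c' :=
  ⟨h.1.comap_s14 ι hf hc, fun r s t hrs hst hc' hadj =>
    ι.map_adj_iff.mp (h.2 _ _ _ (hf r s hrs) (hf s t hst) (hc s t hc') (ι.map_adj_iff.mpr hadj))⟩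

theorem ClassesIndependent.comap_s14 (ι : H ↪g G) (hc : ∀ u v, c' u = c' v → c (ι u) = c (ι v))
    (h : ClassesIndependent G c) : ClassesIndependent H c' := fun u v hc' hadj =>
  h _ _ (hc u v hc') (ι.map_adj_iff.mpr hadj)

end Comap

section Basic

variable {V : Type*} {G : SimpleGraph V} {k : ℕ}

theorem IsIndependentProperThin.isIndependentThin (h : IsIndependentProperThin G k) :
    IsIndependentThin G k :=
  let ⟨f, c, hf, hc, hcons, hind⟩ := h
  ⟨f, c, hf, hc, hcons.1, hind⟩

theorem IsIndependentThin.indthin_le (h : IsIndependentThin G k) : indthin G ≤ k :=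
  Nat.sInf_le h

theorem IsIndependentProperThin.indpthin_le (h : IsIndependentProperThin G k) :
    indpthin G ≤ k :=
  Nat.sInf_le h

theorem stronglyConsistent_of_injective {f c : V → ℕ} (hc : Injective c) :
    StronglyConsistent G f c :=
  ⟨fun _ _ _ hrs _ h _ => absurd hrs (hc h ▸ lt_irrefl _),
    fun _ _ _ _ hst h _ => absurd hst (hc h ▸ lt_irrefl _)⟩

theorem classesIndependent_of_injective {c : V → ℕ} (hc : Injective c) :
    ClassesIndependent G c :=
  fun _ _ h => hc h ▸ G.irrefl

variable (G)

theorem isIndependentProperThin_natCard [Finite V] : IsIndependentProperThin G (Nat.card V) := by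
  let e : V → ℕ := fun v => Finite.equivFin V v
  have he : Injective e := Fin.val_injective.comp (Finite.equivFin V).injective
  exact ⟨e, e, he, fun v => (Finite.equivFin V v).isLt, stronglyConsistent_of_injective he,
    classesIndependent_of_injective he⟩

theorem isIndependentThin_indthin [Finite V] : IsIndependentThin G (indthin G) :=
  Nat.sInf_mem (s := {k | IsIndependentThin G k})
    ⟨_, (isIndependentProperThin_natCard G).isIndependentThin⟩

theorem isIndependentProperThin_indpthin [Finite V] :
    IsIndependentProperThin G (indpthin G) :=
  Nat.sInf_mem (s := {k | IsIndependentProperThin G k}) ⟨_, isIndependentProperThin_natCard G⟩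

end Basic

theorem exists_classes_lt_card_image {V : Type*} [Fintype V] (c : V → ℕ) :
    ∃ c' : V → ℕ, (∀ v, c' v < #(univ.image c)) ∧ ∀ u v, c' u = c' v → c u = c v := by
  let e := (univ.image c).equivFin
  refine ⟨fun v => e ⟨c v, mem_image_of_mem c (mem_univ v)⟩, fun v => (e _).isLt, fun u v h => ?_⟩
  simpa using e.injective (Fin.val_injective h)

theorem card_image_comp_inl_add_card_image_comp_inr_le {α β : Type*} [Fintype α] [Fintype β]
    {C : α ⊕ β → ℕ} {k : ℕ} (hC : ∀ x, C x < k) (hdisj : ∀ a b, C (inl a) ≠ C (inr b)) :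
    #(univ.image (C ∘ inl)) + #(univ.image (C ∘ inr)) ≤ k := by
  have hdisj' : Disjoint (univ.image (C ∘ inl)) (univ.image (C ∘ inr)) := by
    simp only [Finset.disjoint_left, mem_image, mem_univ, true_and, comp_apply]
    rintro _ ⟨a, rfl⟩ ⟨b, hb⟩
    exact hdisj a b hb.symm
  calc #(univ.image (C ∘ inl)) + #(univ.image (C ∘ inr))
      = #(univ.image (C ∘ inl) ∪ univ.image (C ∘ inr)) := (card_union_of_disjoint hdisj').symm
    _ ≤ #(range k) := card_le_card <| union_subset
        (image_subset_iff.2 fun _ _ => mem_range.2 (hC _))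
        (image_subset_iff.2 fun _ _ => mem_range.2 (hC _))
    _ = k := card_range k

section Compress

variable {V : Type*} [Fintype V] {G : SimpleGraph V} {f c : V → ℕ}

theorem isIndependentThin_card_image (hf : Injective f) (hcons : Consistent G f c)
    (hind : ClassesIndependent G c) : IsIndependentThin G #(univ.image c) :=
  let ⟨c', hlt, hc'⟩ := exists_classes_lt_card_image c
  ⟨f, c', hf, hlt, hcons.comap_s14 .refl (fun _ _ => id) hc', hind.comap_s14 .refl hc'⟩

theorem isIndependentProperThin_card_image (hf : Injective f) (hcons : StronglyConsistent G f c)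
    (hind : ClassesIndependent G c) : IsIndependentProperThin G #(univ.image c) :=
  let ⟨c', hlt, hc'⟩ := exists_classes_lt_card_image c
  ⟨f, c', hf, hlt, hcons.comap_s14 .refl (fun _ _ => id) hc', hind.comap_s14 .refl hc'⟩

end Compress

section Join

variable {V₁ V₂ : Type*} {G₁ : SimpleGraph V₁} {G₂ : SimpleGraph V₂}

def joinG.inlEmbedding (G₁ : SimpleGraph V₁) (G₂ : SimpleGraph V₂) : G₁ ↪g joinG G₁ G₂ :=
  ⟨Embedding.inl, Iff.rfl⟩

def joinG.inrEmbedding (G₁ : SimpleGraph V₁) (G₂ : SimpleGraph V₂) : G₂ ↪g joinG G₁ G₂ :=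
  ⟨Embedding.inr, Iff.rfl⟩

theorem ClassesIndependent.joinG_inl_ne_inr {C : V₁ ⊕ V₂ → ℕ}
    (h : ClassesIndependent (joinG G₁ G₂) C) (u : V₁) (v : V₂) : C (inl u) ≠ C (inr v) :=
  fun hC => h _ _ hC trivial

section OfRestrict

variable {F C : V₁ ⊕ V₂ → ℕ}

theorem consistent_joinG (hC : ∀ u v, C (inl u) ≠ C (inr v))
    (h₁ : Consistent G₁ (F ∘ inl) (C ∘ inl))
    (h₂ : Consistent G₂ (F ∘ inr) (C ∘ inr)) : Consistent (joinG G₁ G₂) F C := by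
  rintro (r | r) (s | s) t hrs hst hc hadj
  · cases t
    exacts [h₁ _ _ _ hrs hst hc hadj, trivial]
  · exact absurd hc (hC r s)
  · exact absurd hc.symm (hC s r)
  · cases t
    exacts [trivial, h₂ _ _ _ hrs hst hc hadj]

theorem stronglyConsistent_joinG (hC : ∀ u v, C (inl u) ≠ C (inr v))
    (h₁ : StronglyConsistent G₁ (F ∘ inl) (C ∘ inl))
    (h₂ : StronglyConsistent G₂ (F ∘ inr) (C ∘ inr)) : StronglyConsistent (joinG G₁ G₂) F C := by
  refine ⟨consistent_joinG hC h₁.1 h₂.1, ?_⟩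
  rintro r (s | s) (t | t) hrs hst hc hadj
  · cases r
    exacts [h₁.2 _ _ _ hrs hst hc hadj, trivial]
  · exact absurd hc (hC s t)
  · exact absurd hc.symm (hC t s)
  · cases r
    exacts [trivial, h₂.2 _ _ _ hrs hst hc hadj]

theorem classesIndependent_joinG (hC : ∀ u v, C (inl u) ≠ C (inr v))
    (h₁ : ClassesIndependent G₁ (C ∘ inl))
    (h₂ : ClassesIndependent G₂ (C ∘ inr)) : ClassesIndependent (joinG G₁ G₂) C := by
  rintro (u | u) (v | v) hc
  · exact h₁ u v hc
  · exact absurd hc (hC u v)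
  · exact absurd hc.symm (hC v u)
  · exact h₂ u v hc

end OfRestrict

section Witness

def joinOrder (f₁ : V₁ → ℕ) (f₂ : V₂ → ℕ) : V₁ ⊕ V₂ → ℕ :=
  Equiv.natSumNatEquivNat ∘ Sum.map f₁ f₂

def joinClasses (k₁ : ℕ) (c₁ : V₁ → ℕ) (c₂ : V₂ → ℕ) : V₁ ⊕ V₂ → ℕ :=
  Sum.elim c₁ (k₁ + c₂ ·)

variable {f₁ c₁ : V₁ → ℕ} {f₂ c₂ : V₂ → ℕ} {k₁ : ℕ}

theorem joinOrder_injective (hf₁ : Injective f₁) (hf₂ : Injective f₂) :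
    Injective (joinOrder f₁ f₂) :=
  Equiv.natSumNatEquivNat.injective.comp (hf₁.sumMap hf₂)

theorem joinOrder_inl_lt_inl_iff {u v : V₁} :
    joinOrder f₁ f₂ (inl u) < joinOrder f₁ f₂ (inl v) ↔ f₁ u < f₁ v := by
  simp [joinOrder, Equiv.natSumNatEquivNat_apply]

theorem joinOrder_inr_lt_inr_iff {u v : V₂} :
    joinOrder f₁ f₂ (inr u) < joinOrder f₁ f₂ (inr v) ↔ f₂ u < f₂ v := by
  simp [joinOrder, Equiv.natSumNatEquivNat_apply]

theorem joinClasses_inl_ne_inr (hc₁ : ∀ v, c₁ v < k₁) (u : V₁) (v : V₂) :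
    joinClasses k₁ c₁ c₂ (inl u) ≠ joinClasses k₁ c₁ c₂ (inr v) := by
  have := hc₁ u
  simp only [joinClasses, elim_inl, elim_inr]
  omega

theorem joinClasses_lt {k₂ : ℕ} (hc₁ : ∀ v, c₁ v < k₁) (hc₂ : ∀ v, c₂ v < k₂) :
    ∀ x, joinClasses k₁ c₁ c₂ x < k₁ + k₂ := by
  rintro (u | v)
  · exact (hc₁ u).trans_le (Nat.le_add_right _ _)
  · exact Nat.add_lt_add_left (hc₂ v) _

theorem Consistent.join (hc₁ : ∀ v, c₁ v < k₁) (h₁ : Consistent G₁ f₁ c₁)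
    (h₂ : Consistent G₂ f₂ c₂) :
    Consistent (joinG G₁ G₂) (joinOrder f₁ f₂) (joinClasses k₁ c₁ c₂) :=
  consistent_joinG (joinClasses_inl_ne_inr hc₁)
    (h₁.comap_s14 .refl (fun _ _ => joinOrder_inl_lt_inl_iff.1) fun _ _ => id)
    (h₂.comap_s14 .refl (fun _ _ => joinOrder_inr_lt_inr_iff.1) fun _ _ => Nat.add_left_cancel)

theorem StronglyConsistent.join (hc₁ : ∀ v, c₁ v < k₁) (h₁ : StronglyConsistent G₁ f₁ c₁)
    (h₂ : StronglyConsistent G₂ f₂ c₂) :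
    StronglyConsistent (joinG G₁ G₂) (joinOrder f₁ f₂) (joinClasses k₁ c₁ c₂) :=
  stronglyConsistent_joinG (joinClasses_inl_ne_inr hc₁)
    (h₁.comap_s14 .refl (fun _ _ => joinOrder_inl_lt_inl_iff.1) fun _ _ => id)
    (h₂.comap_s14 .refl (fun _ _ => joinOrder_inr_lt_inr_iff.1) fun _ _ => Nat.add_left_cancel)

theorem ClassesIndependent.join (hc₁ : ∀ v, c₁ v < k₁) (h₁ : ClassesIndependent G₁ c₁)
    (h₂ : ClassesIndependent G₂ c₂) :
    ClassesIndependent (joinG G₁ G₂) (joinClasses k₁ c₁ c₂) :=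
  classesIndependent_joinG (joinClasses_inl_ne_inr hc₁) (h₁.comap_s14 .refl fun _ _ => id)
    (h₂.comap_s14 .refl fun _ _ => Nat.add_left_cancel)

end Witness

variable {k₁ k₂ : ℕ}

theorem IsIndependentThin.join (h₁ : IsIndependentThin G₁ k₁) (h₂ : IsIndependentThin G₂ k₂) :
    IsIndependentThin (joinG G₁ G₂) (k₁ + k₂) :=
  let ⟨f₁, c₁, hf₁, hc₁, hcons₁, hind₁⟩ := h₁
  let ⟨f₂, c₂, hf₂, hc₂, hcons₂, hind₂⟩ := h₂
  ⟨joinOrder f₁ f₂, joinClasses k₁ c₁ c₂, joinOrder_injective hf₁ hf₂, joinClasses_lt hc₁ hc₂,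
    hcons₁.join hc₁ hcons₂, hind₁.join hc₁ hind₂⟩

theorem IsIndependentProperThin.join (h₁ : IsIndependentProperThin G₁ k₁)
    (h₂ : IsIndependentProperThin G₂ k₂) : IsIndependentProperThin (joinG G₁ G₂) (k₁ + k₂) :=
  let ⟨f₁, c₁, hf₁, hc₁, hcons₁, hind₁⟩ := h₁
  let ⟨f₂, c₂, hf₂, hc₂, hcons₂, hind₂⟩ := h₂
  ⟨joinOrder f₁ f₂, joinClasses k₁ c₁ c₂, joinOrder_injective hf₁ hf₂, joinClasses_lt hc₁ hc₂,
    hcons₁.join hc₁ hcons₂, hind₁.join hc₁ hind₂⟩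

variable [Fintype V₁] [Fintype V₂] {k : ℕ}

theorem IsIndependentThin.exists_add_le_of_joinG (h : IsIndependentThin (joinG G₁ G₂) k) :
    ∃ k₁ k₂, k₁ + k₂ ≤ k ∧ IsIndependentThin G₁ k₁ ∧ IsIndependentThin G₂ k₂ :=
  let ⟨_, _, hF, hC, hcons, hind⟩ := h
  ⟨_, _, card_image_comp_inl_add_card_image_comp_inr_le hC hind.joinG_inl_ne_inr,
    isIndependentThin_card_image (hF.comp inl_injective)
      (hcons.comap_s14 (joinG.inlEmbedding G₁ G₂) (fun _ _ => id) fun _ _ => id)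
      (hind.comap_s14 (joinG.inlEmbedding G₁ G₂) fun _ _ => id),
    isIndependentThin_card_image (hF.comp inr_injective)
      (hcons.comap_s14 (joinG.inrEmbedding G₁ G₂) (fun _ _ => id) fun _ _ => id)
      (hind.comap_s14 (joinG.inrEmbedding G₁ G₂) fun _ _ => id)⟩

theorem IsIndependentProperThin.exists_add_le_of_joinG
    (h : IsIndependentProperThin (joinG G₁ G₂) k) :
    ∃ k₁ k₂, k₁ + k₂ ≤ k ∧ IsIndependentProperThin G₁ k₁ ∧ IsIndependentProperThin G₂ k₂ :=
  let ⟨_, _, hF, hC, hcons, hind⟩ := h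
  ⟨_, _, card_image_comp_inl_add_card_image_comp_inr_le hC hind.joinG_inl_ne_inr,
    isIndependentProperThin_card_image (hF.comp inl_injective)
      (hcons.comap_s14 (joinG.inlEmbedding G₁ G₂) (fun _ _ => id) fun _ _ => id)
      (hind.comap_s14 (joinG.inlEmbedding G₁ G₂) fun _ _ => id),
    isIndependentProperThin_card_image (hF.comp inr_injective)
      (hcons.comap_s14 (joinG.inrEmbedding G₁ G₂) (fun _ _ => id) fun _ _ => id)
      (hind.comap_s14 (joinG.inrEmbedding G₁ G₂) fun _ _ => id)⟩

variable (G₁ G₂)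

theorem indthin_joinG : indthin (joinG G₁ G₂) = indthin G₁ + indthin G₂ := by
  refine le_antisymm
    ((isIndependentThin_indthin G₁).join (isIndependentThin_indthin G₂)).indthin_le ?_
  obtain ⟨k₁, k₂, hk, h₁, h₂⟩ :=
    (isIndependentThin_indthin (joinG G₁ G₂)).exists_add_le_of_joinG
  exact (add_le_add h₁.indthin_le h₂.indthin_le).trans hk

theorem indpthin_joinG : indpthin (joinG G₁ G₂) = indpthin G₁ + indpthin G₂ := by
  refine le_antisymm ((isIndependentProperThin_indpthin G₁).join
    (isIndependentProperThin_indpthin G₂)).indpthin_le ?_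
  obtain ⟨k₁, k₂, hk, h₁, h₂⟩ :=
    (isIndependentProperThin_indpthin (joinG G₁ G₂)).exists_add_le_of_joinG
  exact (add_le_add h₁.indpthin_le h₂.indpthin_le).trans hk

end Join

/-- Independent (proper) thinness of a join is the sum of the independent (proper)
thinnesses. -/
theorem indthin_join {V₁ V₂ : Type*} [Fintype V₁] [Fintype V₂]
    (G₁ : SimpleGraph V₁) (G₂ : SimpleGraph V₂) :
    indthin (joinG G₁ G₂) = indthin G₁ + indthin G₂ ∧
    indpthin (joinG G₁ G₂) = indpthin G₁ + indpthin G₂ :=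
  ⟨indthin_joinG G₁ G₂, indpthin_joinG G₁ G₂⟩
end

section
/- For every n ≥ 1, thin(K_n □ K_n) = n. -/
open SimpleGraph

/-!
Ordering `K_m □ K_n` row by row and taking the columns as classes is consistent, which gives
`thin ≤ n`, and `thin ≤ m` by symmetry. Conversely, in a consistent layout take the row or column
whose last vertex comes earliest, say a row. For two of its vertices `u < w`, the last vertex of
the column of `u` comes after `w`, is adjacent to `u` and not to `w`; so the vertices of that row
are pairwise incompatible and lie in distinct classes.
-/

open Finset Function

section Consistent

variable {V W ι : Type*} {G : SimpleGraph V} {f c : V → ℕ}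

lemma Consistent.comp_embedding {H : SimpleGraph W} (h : Consistent G f c) (φ : H ↪g G) :
    Consistent H (f ∘ φ) (c ∘ φ) := fun _ _ _ hrs hst hc hadj =>
  φ.map_adj_iff.1 (h _ _ _ hrs hst hc (φ.map_adj_iff.2 hadj))

lemma Consistent.injective_comp (h : Consistent G f c) {g : ι → V}
    (hg : Pairwise fun i j => (incompat G f).Adj (g i) (g j)) : Injective (c ∘ g) := by
  intro i j hij
  by_contra hne
  rcases hg hne with ⟨hlt, z, hz, hzi, hzj⟩ | ⟨hlt, z, hz, hzj, hzi⟩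
  · exact hzj (h _ _ _ hlt hz hij hzi)
  · exact hzi (h _ _ _ hlt hz hij.symm hzj)

lemma Consistent.card_le [Fintype ι] {k : ℕ} (h : Consistent G f c) (hc : ∀ v, c v < k)
    {g : ι → V} (hg : Pairwise fun i j => (incompat G f).Adj (g i) (g j)) :
    Fintype.card ι ≤ k := by
  simpa using Fintype.card_le_of_injective (fun i => (⟨c (g i), hc _⟩ : Fin k))
    fun _ _ hij => h.injective_comp hg (congrArg Fin.val hij)

lemma thin_le_of_consistent {k : ℕ} (hf : Injective f) (hc : ∀ v, c v < k)
    (h : Consistent G f c) : thin G ≤ k :=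
  Nat.sInf_le ⟨f, c, hf, hc, h⟩

lemma exists_consistent_thin [Fintype V] (G : SimpleGraph V) :
    ∃ f c : V → ℕ, Injective f ∧ (∀ v, c v < thin G) ∧ Consistent G f c := by
  set e := Fintype.equivFin V
  have he : Injective fun v => (e v : ℕ) := Fin.val_injective.comp e.injective
  -- with all classes singletons, consistency holds vacuously
  exact Nat.sInf_mem (s := {k | ∃ f c : V → ℕ, Injective f ∧ (∀ v, c v < k) ∧ Consistent G f c})
    ⟨_, _, _, he, fun v => (e v).isLt, fun _ _ _ hrs _ hc _ => (he hc ▸ hrs).false.elim⟩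

lemma thin_le_thin_of_embedding [Fintype V] {H : SimpleGraph W} (φ : H ↪g G) :
    thin H ≤ thin G := by
  obtain ⟨f, c, hf, hc, h⟩ := exists_consistent_thin G
  exact thin_le_of_consistent (hf.comp φ.injective) (fun _ => hc _) (h.comp_embedding φ)

end Consistent

section Rook

variable {α β : Type*} [Fintype α] [Fintype β]

/-- The position of the last vertex of row `x`; the column maxima are `rowMax (f ∘ Prod.swap)`. -/
def rowMax (f : α × β → ℕ) (x : α) : ℕ :=
  univ.sup fun y => f (x, y)

lemma pairwise_incompat_row {f : α × β → ℕ} (hf : Injective f) {x₀ : α}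
    (hx₀ : ∀ y, rowMax f x₀ ≤ rowMax (f ∘ Prod.swap) y) :
    Pairwise fun y₁ y₂ =>
      (incompat ((⊤ : SimpleGraph α) □ (⊤ : SimpleGraph β)) f).Adj (x₀, y₁) (x₀, y₂) := by
  have witness : ∀ y₁ y₂, y₁ ≠ y₂ → f (x₀, y₁) < f (x₀, y₂) →
      ∃ z, f (x₀, y₂) < f z ∧ ((⊤ : SimpleGraph α) □ (⊤ : SimpleGraph β)).Adj z (x₀, y₁) ∧
        ¬ ((⊤ : SimpleGraph α) □ (⊤ : SimpleGraph β)).Adj z (x₀, y₂) := by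
    intro y₁ y₂ hne hlt
    -- the last vertex of column `y₁` comes after the whole row `x₀`
    obtain ⟨i, -, hi⟩ := exists_mem_eq_sup univ ⟨x₀, mem_univ _⟩ fun i => f (i, y₁)
    have hle : f (x₀, y₂) ≤ f (i, y₁) :=
      (le_sup (f := fun y => f (x₀, y)) (mem_univ y₂)).trans ((hx₀ y₁).trans hi.le)
    have hix : i ≠ x₀ := by
      rintro rfl
      exact hle.not_gt hlt
    refine ⟨(i, y₁), hle.lt_of_ne (hf.ne (by simp [hne.symm])), ?_, ?_⟩ <;>
      simp [boxProd_adj, hix, hne]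
  intro y₁ y₂ hne
  rcases lt_or_gt_of_ne (hf.ne (by simpa using hne : (x₀, y₁) ≠ (x₀, y₂))) with hlt | hgt
  · exact Or.inl ⟨hlt, witness y₁ y₂ hne hlt⟩
  · exact Or.inr ⟨hgt, witness y₂ y₁ hne.symm hgt⟩

lemma min_card_le_of_consistent {f c : α × β → ℕ} {k : ℕ} (hf : Injective f)
    (hc : ∀ v, c v < k) (h : Consistent ((⊤ : SimpleGraph α) □ (⊤ : SimpleGraph β)) f c) :
    min (Fintype.card α) (Fintype.card β) ≤ k := by
  rcases isEmpty_or_nonempty α with hα | hα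
  · simp
  rcases isEmpty_or_nonempty β with hβ | hβ
  · simp
  obtain ⟨x₀, -, hx₀⟩ := exists_min_image univ (rowMax f) univ_nonempty
  obtain ⟨y₀, -, hy₀⟩ := exists_min_image univ (rowMax (f ∘ Prod.swap)) univ_nonempty
  rcases le_total (rowMax f x₀) (rowMax (f ∘ Prod.swap) y₀) with hrow | hcol
  · exact (min_le_right _ _).trans <| h.card_le hc <|
      pairwise_incompat_row hf fun y => hrow.trans (hy₀ y (mem_univ y))
  · exact (min_le_left _ _).trans <|
      (h.comp_embedding (boxProdComm ⊤ ⊤).toEmbedding).card_le (fun _ => hc _) <|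
        pairwise_incompat_row (hf.comp Prod.swap_injective) fun x => hcol.trans (hx₀ x (mem_univ x))

end Rook

lemma consistent_finProdFinEquiv (m n : ℕ) :
    Consistent ((⊤ : SimpleGraph (Fin m)) □ (⊤ : SimpleGraph (Fin n)))
      (fun v => finProdFinEquiv v) (fun v => v.2) := by
  rintro ⟨r₁, r₂⟩ ⟨s₁, s₂⟩ ⟨t₁, t₂⟩ hrs hst hc hadj
  simp only [finProdFinEquiv_apply_val] at hrs hst hc
  simp only [boxProd_adj, top_adj] at hadj ⊢
  rcases hadj with ⟨-, rfl⟩ | ⟨-, rfl⟩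
  · refine Or.inl ⟨?_, Fin.ext hc⟩
    rintro rfl
    omega
  · -- rows are consecutive blocks, so `t` cannot come back to the row of `r` after `s`
    have hrow : (t₁ : ℕ) < s₁ := Nat.lt_of_mul_lt_mul_left (a := n) (by omega)
    have : n * t₁ + n ≤ n * s₁ := Nat.mul_succ n t₁ ▸ Nat.mul_le_mul_left n hrow
    have := t₂.isLt
    omega

lemma thin_boxProd_top_le_right (m n : ℕ) :
    thin ((⊤ : SimpleGraph (Fin m)) □ (⊤ : SimpleGraph (Fin n))) ≤ n :=
  thin_le_of_consistent (Fin.val_injective.comp finProdFinEquiv.injective) (fun v => v.2.isLt)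
    (consistent_finProdFinEquiv m n)

theorem thin_boxProd_top (m n : ℕ) :
    thin ((⊤ : SimpleGraph (Fin m)) □ (⊤ : SimpleGraph (Fin n))) = min m n := by
  have hrow := (thin_le_thin_of_embedding (boxProdComm ⊤ ⊤).toEmbedding).trans
    (thin_boxProd_top_le_right n m)
  refine le_antisymm (le_min hrow (thin_boxProd_top_le_right m n)) ?_
  obtain ⟨f, c, hf, hc, h⟩ :=
    exists_consistent_thin ((⊤ : SimpleGraph (Fin m)) □ (⊤ : SimpleGraph (Fin n)))
  simpa using min_card_le_of_consistent hf hc h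

theorem thin_rook_general (n : ℕ) :
    thin ((⊤ : SimpleGraph (Fin n)) □ (⊤ : SimpleGraph (Fin n))) = n := by
  rw [thin_boxProd_top, min_self]

/-- For every `n ≥ 1`, `thin (K_n □ K_n) = n`. -/
theorem thin_rook (n : ℕ) (hn : 1 ≤ n) :
    thin ((⊤ : SimpleGraph (Fin n)) □ (⊤ : SimpleGraph (Fin n))) = n :=
  thin_rook_general n
end
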